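/- Let n ≥ 1, let F be a C^∞ function on a connected open set Ω ⊆ ℝ^{n+1} on which U(F) is nowhere zero, and define the 1-form ρ := −|U(F)|^{−1/(n+2)}·dF on Ω. Then the following are equivalent: (i) dU(F) ∧ dF = 0 on Ω (equivalently, U(F) is locally constant on each level set of F); (ii) dρ = 0 on Ω; (iii) μ(F) ∧ dF = 0 on Ω, where μ(F) = (n+2)⁻¹·d(log|U(F)|); (iv) at every point of Ω the vectors 𝔑(F) and N(F) are linearly dependent; (v) 𝔑(F) = −sign(U(F))·|U(F)|^{−(n+1)/(n+2)}·N(F) on Ω. -/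

import Mathlib

/-!
Since `μ(F) = ((n+2) U)⁻¹ dU` and, by symmetry of the Hessian,
`dρ = -d(|U|^{-1/(n+2)}) ∧ dF` with `d(|U|^{-1/(n+2)})` a nonzero multiple of `dU`,
conditions (i)–(iii) all say `dU ∧ dF = 0`.
For the matrix `M = M₁` one has `M N = ∇F` and, by the matrix determinant lemma, `det M = 1`;
hence `σ ∇F = 0`, `∇Fᵀ σ = 0` and `ker σ = span ∇F`. So (iii) says `σ μ = 0`, which is exactly
the vanishing of the second term of `𝔑`, i.e. (v). Finally `⟨∇F, N⟩ = U ≠ 0` while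
`⟨∇F, σ μ⟩ = 0`, so `𝔑` and `N` can only be dependent when `σ μ = 0`, which gives (iv).
-/

open Matrix

noncomputable def pd1 {ι : Type*} [Fintype ι] [DecidableEq ι]
    (F : (ι → ℝ) → ℝ) (i : ι) (x : ι → ℝ) : ℝ :=
  fderiv ℝ F x (Pi.single i 1)

noncomputable def gradv {ι : Type*} [Fintype ι] [DecidableEq ι]
    (F : (ι → ℝ) → ℝ) (x : ι → ℝ) : ι → ℝ :=
  fun i => pd1 F i x

noncomputable def hessM {ι : Type*} [Fintype ι] [DecidableEq ι]
    (F : (ι → ℝ) → ℝ) (x : ι → ℝ) : Matrix ι ι ℝ :=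
  Matrix.of fun i j => pd1 (pd1 F j) i x

noncomputable def Hdet {ι : Type*} [Fintype ι] [DecidableEq ι]
    (F : (ι → ℝ) → ℝ) (x : ι → ℝ) : ℝ :=
  (hessM F x).det

noncomputable def Nvec {ι : Type*} [Fintype ι] [DecidableEq ι]
    (F : (ι → ℝ) → ℝ) (x : ι → ℝ) : ι → ℝ :=
  (hessM F x).adjugate *ᵥ gradv F x

noncomputable def Uval {ι : Type*} [Fintype ι] [DecidableEq ι]
    (F : (ι → ℝ) → ℝ) (x : ι → ℝ) : ℝ :=
  gradv F x ⬝ᵥ Nvec F x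

/-- The matrix `σ(F)` of the context, computed with the choice `q = 1` (it is
independent of the choice of nonvanishing `q`). -/
noncomputable def sigmaF {n : ℕ} (F : (Fin (n+1) → ℝ) → ℝ) (x : Fin (n+1) → ℝ) :
    Matrix (Fin (n+1)) (Fin (n+1)) ℝ :=
  (hessM F x - ((Uval F x)⁻¹ * Hdet F x) • Matrix.vecMulVec (gradv F x) (gradv F x)
      + (Uval F x)⁻¹ • Matrix.vecMulVec (gradv F x) (gradv F x))⁻¹
    - (Uval F x)⁻¹ • Matrix.vecMulVec (Nvec F x) (Nvec F x)

/-- The one-form `μ(F) = (n+2)⁻¹ ∇(log |U(F)|)`. -/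
noncomputable def muF (n : ℕ) (F : (Fin (n+1) → ℝ) → ℝ) (x : Fin (n+1) → ℝ) :
    Fin (n+1) → ℝ :=
  ((n : ℝ) + 2)⁻¹ • gradv (fun y => Real.log |Uval F y|) x

/-- The equiaffine normal field
`𝔑(F) = −|U(F)|^{1/(n+2)} U(F)⁻¹ N(F) − |U(F)|^{1/(n+2)} σ(F) μ(F)`. -/
noncomputable def EANormal (n : ℕ) (F : (Fin (n+1) → ℝ) → ℝ) (x : Fin (n+1) → ℝ) :
    Fin (n+1) → ℝ :=
  (-(|Uval F x| ^ ((1 : ℝ)/((n : ℝ)+2)) * (Uval F x)⁻¹)) • Nvec F x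
    - (|Uval F x| ^ ((1 : ℝ)/((n : ℝ)+2))) • (sigmaF F x *ᵥ muF n F x)

theorem wedge_iff_exists_eq_smul {ι K : Type*} [Field K] {v g : ι → K} (hg : g ≠ 0) :
    (∀ i j, v i * g j = v j * g i) ↔ ∃ c : K, v = c • g := by
  constructor
  · intro h
    obtain ⟨k, hk⟩ := Function.ne_iff.mp hg
    refine ⟨v k / g k, funext fun i => ?_⟩
    rw [Pi.smul_apply, smul_eq_mul, div_mul_eq_mul_div, eq_div_iff hk]
    exact h i k
  · rintro ⟨c, rfl⟩ i j
    simp only [Pi.smul_apply, smul_eq_mul]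
    ring

theorem wedge_smul_left_iff {ι K : Type*} [Field K] {v g : ι → K} {c : K} (hc : c ≠ 0) :
    (∀ i j, (c • v) i * g j = (c • v) j * g i) ↔ ∀ i j, v i * g j = v j * g i := by
  simp only [Pi.smul_apply, smul_eq_mul, mul_assoc, mul_right_inj' hc]

namespace Matrix

variable {ι R : Type*} [Fintype ι] [DecidableEq ι] [CommRing R]

theorem det_add_vecMulVec (A : Matrix ι ι R) (u v : ι → R) :
    (A + vecMulVec u v).det = A.det + v ⬝ᵥ A.adjugate *ᵥ u := by
  set f := (detRowAlternating : (ι → R) [⋀^ι]→ₗ[R] R)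
  set w : ι → ι → R := fun i => u i • v
  have hexpand : (A + vecMulVec u v).det = ∑ s : Finset ι, f (s.piecewise w fun i => A i) := by
    have hA : A + vecMulVec u v = Matrix.of (w + fun i => A i) := by
      ext i j
      simp [vecMulVec_apply, w, add_comm]
    rw [hA]
    exact f.toMultilinearMap.map_add_univ w (fun i => A i)
  -- a term with two rows proportional to `v` vanishes
  have hzero : ∀ s : Finset ι, 1 < s.card → f (s.piecewise w fun i => A i) = 0 := by
    intro s hs
    obtain ⟨i, hi, j, hj, hij⟩ := Finset.one_lt_card.mp hs
    set r := s.piecewise w fun i => A i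
    have hri : r i = u i • v := s.piecewise_eq_of_mem _ _ hi
    have hrj : r j = u j • v := s.piecewise_eq_of_mem _ _ hj
    have hupd : Function.update r i v = Function.update (Function.update r i v) j (u j • v) := by
      rw [← hrj, ← Function.update_of_ne hij.symm v r, Function.update_eq_self]
    rw [← Function.update_eq_self i r, hri, f.map_update_smul, hupd, f.map_update_smul,
      f.map_eq_zero_of_eq _ (by simp [Function.update_of_ne hij]) hij, smul_zero, smul_zero]
  have hsmall : Finset.univ.filter (fun s : Finset ι => s.card ≤ 1)
      = insert ∅ (Finset.univ.image fun k : ι => {k}) := by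
    ext s
    simp only [Finset.mem_filter, Finset.mem_univ, true_and, Finset.mem_insert,
      Finset.mem_image]
    refine ⟨fun hs => ?_, by rintro (rfl | ⟨a, -, rfl⟩) <;> simp⟩
    rcases Nat.le_one_iff_eq_zero_or_eq_one.mp hs with h | h
    · exact Or.inl (Finset.card_eq_zero.mp h)
    · obtain ⟨a, rfl⟩ := Finset.card_eq_one.mp h
      exact Or.inr ⟨a, rfl⟩
  rw [hexpand, ← Finset.sum_filter_of_ne (p := fun s : Finset ι => s.card ≤ 1)
      fun s _ h => not_lt.mp (mt (hzero s) h), hsmall, Finset.sum_insert (by simp),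
    Finset.sum_image fun a _ b _ h => Finset.singleton_injective h, Finset.piecewise_empty]
  congr 1
  calc ∑ k, f (({k} : Finset ι).piecewise w fun i => A i)
      = ∑ k, u k * (A.updateRow k v).det := by
        refine Finset.sum_congr rfl fun k _ => ?_
        rw [Finset.piecewise_singleton, f.map_update_smul, smul_eq_mul]
        rfl
    _ = v ⬝ᵥ A.adjugate *ᵥ u := by
        simp_rw [← cramer_transpose_apply]
        change u ⬝ᵥ Aᵀ.cramer v = _
        rw [cramer_eq_adjugate_mulVec, ← adjugate_transpose, mulVec_transpose, dotProduct_comm,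
          dotProduct_mulVec]

end Matrix

section Sigma

variable {ι K : Type*} [Fintype ι] [DecidableEq ι] [Field K] {A : Matrix ι ι K} {g : ι → K}

/-- The matrix `M_q` of the context, with `q = 1`. -/
noncomputable def modifiedHessian (A : Matrix ι ι K) (g : ι → K) : Matrix ι ι K :=
  A - ((g ⬝ᵥ A.adjugate *ᵥ g)⁻¹ * A.det) • vecMulVec g g
    + (g ⬝ᵥ A.adjugate *ᵥ g)⁻¹ • vecMulVec g g

noncomputable def sigmaMatrix (A : Matrix ι ι K) (g : ι → K) : Matrix ι ι K :=
  (modifiedHessian A g)⁻¹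
    - (g ⬝ᵥ A.adjugate *ᵥ g)⁻¹ • vecMulVec (A.adjugate *ᵥ g) (A.adjugate *ᵥ g)

theorem modifiedHessian_eq_add_vecMulVec (A : Matrix ι ι K) (g : ι → K) :
    modifiedHessian A g = A + vecMulVec
      (((g ⬝ᵥ A.adjugate *ᵥ g)⁻¹ - (g ⬝ᵥ A.adjugate *ᵥ g)⁻¹ * A.det) • g) g := by
  rw [modifiedHessian, smul_vecMulVec, sub_smul]
  abel

theorem det_modifiedHessian (hU : g ⬝ᵥ A.adjugate *ᵥ g ≠ 0) : (modifiedHessian A g).det = 1 := by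
  rw [modifiedHessian_eq_add_vecMulVec, det_add_vecMulVec, mulVec_smul, dotProduct_smul,
    smul_eq_mul]
  field_simp
  ring

theorem isUnit_det_modifiedHessian (hU : g ⬝ᵥ A.adjugate *ᵥ g ≠ 0) :
    IsUnit (modifiedHessian A g).det := by
  rw [det_modifiedHessian hU]
  exact isUnit_one

theorem modifiedHessian_mulVec_adjugate_mulVec (hU : g ⬝ᵥ A.adjugate *ᵥ g ≠ 0) :
    modifiedHessian A g *ᵥ (A.adjugate *ᵥ g) = g := by
  rw [modifiedHessian_eq_add_vecMulVec, add_mulVec, mulVec_mulVec, mul_adjugate, smul_mulVec,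
    one_mulVec, vecMulVec_mulVec, op_smul_eq_smul, smul_smul, ← add_smul]
  convert one_smul K g
  field_simp
  ring

theorem modifiedHessian_transpose (hA : Aᵀ = A) :
    (modifiedHessian A g)ᵀ = modifiedHessian A g := by
  simp [modifiedHessian, transpose_vecMulVec, hA]

theorem sigmaMatrix_transpose (hA : Aᵀ = A) : (sigmaMatrix A g)ᵀ = sigmaMatrix A g := by
  simp [sigmaMatrix, transpose_nonsing_inv, modifiedHessian_transpose hA, transpose_vecMulVec]

theorem sigmaMatrix_mulVec_self (hU : g ⬝ᵥ A.adjugate *ᵥ g ≠ 0) : sigmaMatrix A g *ᵥ g = 0 := by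
  have hinv : (modifiedHessian A g)⁻¹ *ᵥ g = A.adjugate *ᵥ g := by
    calc (modifiedHessian A g)⁻¹ *ᵥ g
        = (modifiedHessian A g)⁻¹ *ᵥ (modifiedHessian A g *ᵥ (A.adjugate *ᵥ g)) := by
          rw [modifiedHessian_mulVec_adjugate_mulVec hU]
      _ = A.adjugate *ᵥ g := by
          rw [mulVec_mulVec, nonsing_inv_mul _ (isUnit_det_modifiedHessian hU), one_mulVec]
  rw [sigmaMatrix, sub_mulVec, smul_mulVec, vecMulVec_mulVec, op_smul_eq_smul, hinv,
    dotProduct_comm (A.adjugate *ᵥ g) g, smul_smul, inv_mul_cancel₀ hU, one_smul, sub_self]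

theorem sigmaMatrix_mulVec_eq_zero_iff (hU : g ⬝ᵥ A.adjugate *ᵥ g ≠ 0) {v : ι → K} :
    sigmaMatrix A g *ᵥ v = 0 ↔ ∃ c : K, v = c • g := by
  refine ⟨fun hv => ?_, ?_⟩
  · rw [sigmaMatrix, sub_mulVec, smul_mulVec, vecMulVec_mulVec, op_smul_eq_smul, smul_smul,
      sub_eq_zero] at hv
    refine ⟨(g ⬝ᵥ A.adjugate *ᵥ g)⁻¹ * (A.adjugate *ᵥ g ⬝ᵥ v), ?_⟩
    calc v = modifiedHessian A g *ᵥ ((modifiedHessian A g)⁻¹ *ᵥ v) := by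
          rw [mulVec_mulVec, mul_nonsing_inv _ (isUnit_det_modifiedHessian hU), one_mulVec]
      _ = _ := by rw [hv, mulVec_smul, modifiedHessian_mulVec_adjugate_mulVec hU]
  · rintro ⟨c, rfl⟩
    rw [mulVec_smul, sigmaMatrix_mulVec_self hU, smul_zero]

theorem dotProduct_sigmaMatrix_mulVec (hA : Aᵀ = A) (hU : g ⬝ᵥ A.adjugate *ᵥ g ≠ 0)
    (v : ι → K) : g ⬝ᵥ sigmaMatrix A g *ᵥ v = 0 := by
  rw [dotProduct_mulVec, ← sigmaMatrix_transpose hA, vecMul_transpose,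
    sigmaMatrix_mulVec_self hU, zero_dotProduct]

end Sigma

theorem exists_smul_add_smul_eq_zero_iff {ι K : Type*} [Fintype ι] [Field K] {N w g : ι → K}
    {c s : K} (hN : g ⬝ᵥ N ≠ 0) (hw : g ⬝ᵥ w = 0) (hs : s ≠ 0) :
    (∃ a b : K, ¬(a = 0 ∧ b = 0) ∧ a • (c • N - s • w) + b • N = 0) ↔ w = 0 := by
  refine ⟨fun ⟨a, b, hab, h⟩ => ?_, fun hw0 => ⟨1, -c, by simp, by simp [hw0]⟩⟩
  have hb : b = -(a * c) := by
    have hdot := congrArg (g ⬝ᵥ ·) h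
    simp only [dotProduct_add, dotProduct_smul, dotProduct_sub, hw, smul_eq_mul,
      dotProduct_zero] at hdot
    refine mul_right_cancel₀ hN ?_
    linear_combination hdot
  have ha : a ≠ 0 := fun ha => hab ⟨ha, by simp [hb, ha]⟩
  rw [hb, smul_sub, smul_smul, smul_smul, neg_smul] at h
  have : (a * s) • w = 0 := by rw [← neg_eq_zero, ← h]; abel
  exact (smul_eq_zero.mp this).resolve_left (mul_ne_zero ha hs)

theorem abs_rpow_mul_inv {u : ℝ} (hu : u ≠ 0) (p : ℝ) :
    |u| ^ p * u⁻¹ = Real.sign u * |u| ^ (p - 1) := by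
  rw [Real.rpow_sub (abs_pos.mpr hu), Real.rpow_one]
  rcases hu.lt_or_gt with h | h
  · rw [Real.sign_of_neg h, abs_of_neg h]
    field_simp
  · rw [Real.sign_of_pos h, abs_of_pos h]
    field_simp

section Calculus

variable {ι : Type*} [Fintype ι] [DecidableEq ι]

section Entries

variable {E : Type*} [NormedAddCommGroup E] [NormedSpace ℝ E] {m : WithTop ℕ∞}
  {A : E → Matrix ι ι ℝ} {x : E}

theorem contDiffAt_det (hA : ∀ i j, ContDiffAt ℝ m (fun y => A y i j) x) :
    ContDiffAt ℝ m (fun y => (A y).det) x := by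
  simp only [det_apply, Units.smul_def, zsmul_eq_mul]
  exact ContDiffAt.sum fun σ _ => contDiffAt_const.mul (contDiffAt_prod fun k _ => hA _ _)

theorem contDiffAt_adjugate_apply (hA : ∀ i j, ContDiffAt ℝ m (fun y => A y i j) x) (i j : ι) :
    ContDiffAt ℝ m (fun y => (A y).adjugate i j) x := by
  simp only [adjugate_apply]
  refine contDiffAt_det fun k l => ?_
  simp only [updateRow_apply]
  split_ifs
  exacts [contDiffAt_const, hA k l]

end Entries

variable {m : WithTop ℕ∞} {f g u : (ι → ℝ) → ℝ} {x : ι → ℝ}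

theorem ContDiffAt.pd1 (hf : ContDiffAt ℝ (m + 1) f x) (j : ι) : ContDiffAt ℝ m (pd1 f j) x :=
  (hf.fderiv_right le_rfl).clm_apply contDiffAt_const

theorem contDiffAt_Uval (hf : ContDiffAt ℝ (m + 1 + 1) f x) : ContDiffAt ℝ m (Uval f) x := by
  have hg : ∀ j, ContDiffAt ℝ m (fun y => gradv f y j) x := fun j =>
    (hf.pd1 j).of_le le_self_add
  have hH : ∀ i j, ContDiffAt ℝ m (fun y => hessM f y i j) x := fun i j => (hf.pd1 j).pd1 i
  unfold Uval Nvec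
  simp only [dotProduct, mulVec]
  exact ContDiffAt.sum fun i _ => (hg i).mul <| ContDiffAt.sum fun j _ =>
    (contDiffAt_adjugate_apply hH i j).mul (hg j)

theorem pd1_pd1_comm (hf : ContDiffAt ℝ 2 f x) (i j : ι) :
    pd1 (pd1 f j) i x = pd1 (pd1 f i) j x := by
  have hdf : DifferentiableAt ℝ (fderiv ℝ f) x :=
    (hf.fderiv_right (m := 1) le_rfl).differentiableAt one_ne_zero
  have hsecond : ∀ a b : ι, pd1 (pd1 f b) a x
      = fderiv ℝ (fderiv ℝ f) x (Pi.single a 1) (Pi.single b 1) := by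
    intro a b
    change fderiv ℝ (fun y => fderiv ℝ f y (Pi.single b 1)) x (Pi.single a 1) = _
    simp [fderiv_clm_apply hdf (differentiableAt_const _)]
  rw [hsecond, hsecond, (hf.isSymmSndFDerivAt (by simp)).eq]

theorem hessM_transpose (hf : ContDiffAt ℝ 2 f x) : (hessM f x)ᵀ = hessM f x := by
  ext i j
  exact pd1_pd1_comm hf j i

theorem pd1_neg (f : (ι → ℝ) → ℝ) (i : ι) (x : ι → ℝ) :
    pd1 (fun y => -f y) i x = -pd1 f i x := by
  simp only [pd1, fderiv_fun_neg]
  rfl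

theorem pd1_mul (hf : DifferentiableAt ℝ f x) (hg : DifferentiableAt ℝ g x)
    (i : ι) : pd1 (fun y => f y * g y) i x = pd1 f i x * g x + f x * pd1 g i x := by
  simp only [pd1, fderiv_fun_mul hf hg, _root_.add_apply, _root_.smul_apply, smul_eq_mul]
  ring

theorem pd1_abs_rpow (hu : DifferentiableAt ℝ u x) (hx : u x ≠ 0) (p : ℝ) (i : ι) :
    pd1 (fun y => |u y| ^ p) i x = p * |u x| ^ (p - 1) * SignType.sign (u x) * pd1 u i x := by
  simp only [pd1, ((hu.hasFDerivAt.abs hx).rpow_const (Or.inl (abs_ne_zero.mpr hx))).fderiv,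
    _root_.smul_apply, smul_eq_mul]
  ring

theorem pd1_log_abs (hu : DifferentiableAt ℝ u x) (hx : u x ≠ 0) (i : ι) :
    pd1 (fun y => Real.log |u y|) i x = (u x)⁻¹ * pd1 u i x := by
  simp only [Real.log_abs, pd1, (hu.hasFDerivAt.log hx).fderiv]
  rfl

end Calculus

theorem gradv_ne_zero {ι : Type*} [Fintype ι] [DecidableEq ι] {F : (ι → ℝ) → ℝ} {x : ι → ℝ}
    (hU : Uval F x ≠ 0) : gradv F x ≠ 0 := by
  rintro h
  exact hU (by rw [Uval, h, zero_dotProduct])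

section Pointwise

variable {n : ℕ} {F : (Fin (n+1) → ℝ) → ℝ} {x : Fin (n+1) → ℝ}

theorem sigmaF_eq_sigmaMatrix : sigmaF F x = sigmaMatrix (hessM F x) (gradv F x) := rfl

theorem differentiableAt_Uval (hF : ContDiffAt ℝ 3 F x) : DifferentiableAt ℝ (Uval F) x :=
  (contDiffAt_Uval (m := 1) hF).differentiableAt one_ne_zero

theorem muF_eq (hF : ContDiffAt ℝ 3 F x) (hU : Uval F x ≠ 0) :
    muF n F x = (((n : ℝ) + 2)⁻¹ * (Uval F x)⁻¹) • gradv (Uval F) x := by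
  ext i
  simp only [muF, Pi.smul_apply, gradv, pd1_log_abs (differentiableAt_Uval hF) hU, smul_eq_mul,
    mul_assoc]

theorem wedge_muF_iff (hF : ContDiffAt ℝ 3 F x) (hU : Uval F x ≠ 0) :
    (∀ i j, muF n F x i * gradv F x j = muF n F x j * gradv F x i) ↔
      ∀ i j, gradv (Uval F) x i * gradv F x j = gradv (Uval F) x j * gradv F x i := by
  rw [muF_eq hF hU]
  exact wedge_smul_left_iff (mul_ne_zero (by positivity) (inv_ne_zero hU))

theorem conormal_closed_iff (hF : ContDiffAt ℝ 3 F x) (hU : Uval F x ≠ 0) :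
    (∀ i j, pd1 (fun y => -(|Uval F y| ^ (-(1 : ℝ)/((n : ℝ)+2)) * gradv F y j)) i x
        = pd1 (fun y => -(|Uval F y| ^ (-(1 : ℝ)/((n : ℝ)+2)) * gradv F y i)) j x) ↔
      ∀ i j, gradv (Uval F) x i * gradv F x j = gradv (Uval F) x j * gradv F x i := by
  set p : ℝ := -1 / ((n : ℝ) + 2)
  set c := p * |Uval F x| ^ (p - 1) * SignType.sign (Uval F x)
  have hc : c ≠ 0 := by
    have hn : (n : ℝ) + 2 ≠ 0 := by positivity
    have hsign : (SignType.sign (Uval F x) : ℝ) ≠ 0 := fun h =>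
      hU (by rw [← sign_mul_abs (Uval F x), h, zero_mul])
    simp [c, p, hn, hsign, (abs_pos.mpr hU).ne', Real.rpow_eq_zero_iff_of_nonneg]
  have hUd := differentiableAt_Uval hF
  have hderiv : ∀ i j, pd1 (fun y => -(|Uval F y| ^ p * gradv F y j)) i x
      = -(c * gradv (Uval F) x i * gradv F x j + |Uval F x| ^ p * hessM F x i j) := by
    intro i j
    rw [pd1_neg, pd1_mul (g := fun y => gradv F y j)
      ((hUd.abs hU).rpow_const (Or.inl (abs_ne_zero.mpr hU)))
      ((hF.pd1 j).differentiableAt two_ne_zero), pd1_abs_rpow hUd hU]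
    rfl
  have hsym : ∀ i j, hessM F x i j = hessM F x j i := pd1_pd1_comm (hF.of_le (by norm_num))
  refine forall₂_congr fun i j => ?_
  rw [hderiv, hderiv, hsym i j]
  constructor <;> intro h
  · exact mul_left_cancel₀ hc (by linear_combination -h)
  · linear_combination -c * h

theorem sigmaF_mulVec_muF_eq_zero_iff (hU : Uval F x ≠ 0) :
    sigmaF F x *ᵥ muF n F x = 0 ↔
      ∀ i j, muF n F x i * gradv F x j = muF n F x j * gradv F x i := by
  rw [wedge_iff_exists_eq_smul (gradv_ne_zero hU), sigmaF_eq_sigmaMatrix]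
  exact sigmaMatrix_mulVec_eq_zero_iff hU

theorem EANormal_eq_iff (hU : Uval F x ≠ 0) :
    EANormal n F x
        = (-(Real.sign (Uval F x) * |Uval F x| ^ (-((n : ℝ)+1)/((n : ℝ)+2)))) • Nvec F x ↔
      sigmaF F x *ᵥ muF n F x = 0 := by
  have hexp : -((n : ℝ) + 1) / ((n : ℝ) + 2) = 1 / ((n : ℝ) + 2) - 1 := by
    field_simp
    ring
  rw [EANormal, hexp, ← abs_rpow_mul_inv hU, sub_eq_self, smul_eq_zero]
  exact or_iff_right (Real.rpow_pos_of_pos (abs_pos.mpr hU) _).ne'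

theorem exists_dependent_EANormal_Nvec_iff (hF : ContDiffAt ℝ 2 F x) (hU : Uval F x ≠ 0) :
    (∃ a b : ℝ, ¬(a = 0 ∧ b = 0) ∧ a • EANormal n F x + b • Nvec F x = 0) ↔
      sigmaF F x *ᵥ muF n F x = 0 := by
  rw [EANormal, sigmaF_eq_sigmaMatrix]
  exact exists_smul_add_smul_eq_zero_iff hU
    (dotProduct_sigmaMatrix_mulVec (hessM_transpose hF) hU _)
    (Real.rpow_pos_of_pos (abs_pos.mpr hU) _).ne'

end Pointwise

theorem stmt10_general (n : ℕ)
    (Ω : Set (Fin (n+1) → ℝ)) (hΩ : IsOpen Ω)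
    (F : (Fin (n+1) → ℝ) → ℝ) (hF : ContDiffOn ℝ (⊤ : ℕ∞) F Ω)
    (hU : ∀ x ∈ Ω, Uval F x ≠ 0) :
    List.TFAE [
      (∀ x ∈ Ω, ∀ i j : Fin (n+1),
        gradv (Uval F) x i * gradv F x j = gradv (Uval F) x j * gradv F x i),
      (∀ x ∈ Ω, ∀ i j : Fin (n+1),
        pd1 (fun y => -(|Uval F y| ^ (-(1 : ℝ)/((n : ℝ)+2)) * gradv F y j)) i x
          = pd1 (fun y => -(|Uval F y| ^ (-(1 : ℝ)/((n : ℝ)+2)) * gradv F y i)) j x),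
      (∀ x ∈ Ω, ∀ i j : Fin (n+1),
        muF n F x i * gradv F x j = muF n F x j * gradv F x i),
      (∀ x ∈ Ω, ∃ a b : ℝ, ¬(a = 0 ∧ b = 0) ∧
        a • EANormal n F x + b • Nvec F x = 0),
      (∀ x ∈ Ω, EANormal n F x
        = (-(Real.sign (Uval F x) * |Uval F x| ^ (-((n : ℝ)+1)/((n : ℝ)+2)))) • Nvec F x)
    ] := by
  have hF3 : ∀ x ∈ Ω, ContDiffAt ℝ 3 F x := fun x hx =>
    (hF.contDiffAt (hΩ.mem_nhds hx)).of_le (WithTop.coe_le_coe.mpr le_top)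
  tfae_have 1 ↔ 3 := forall₂_congr fun x hx => (wedge_muF_iff (hF3 x hx) (hU x hx)).symm
  tfae_have 2 ↔ 1 := forall₂_congr fun x hx => conormal_closed_iff (hF3 x hx) (hU x hx)
  tfae_have 3 ↔ 5 := forall₂_congr fun x hx =>
    (sigmaF_mulVec_muF_eq_zero_iff (hU x hx)).symm.trans (EANormal_eq_iff (hU x hx)).symm
  tfae_have 4 ↔ 5 := forall₂_congr fun x hx =>
    (exists_dependent_EANormal_Nvec_iff ((hF3 x hx).of_le (by norm_num)) (hU x hx)).trans
      (EANormal_eq_iff (hU x hx)).symm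
  tfae_finish

/-- equivalent characterizations, on a connected open set where `U(F)`
is nowhere zero, of `U(F)` being locally constant on the level sets of `F`:
(i) `dU(F) ∧ dF = 0`; (ii) the conormal `ρ = −|U(F)|^{−1/(n+2)} dF` is closed;
(iii) `μ(F) ∧ dF = 0`; (iv) `𝔑(F)` and `N(F)` are everywhere linearly dependent;
(v) `𝔑(F) = −sign(U(F)) |U(F)|^{−(n+1)/(n+2)} N(F)`. -/
theorem stmt10 (n : ℕ) (hn : 1 ≤ n)
    (Ω : Set (Fin (n+1) → ℝ)) (hΩ : IsOpen Ω) (hΩconn : IsConnected Ω)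
    (F : (Fin (n+1) → ℝ) → ℝ) (hF : ContDiffOn ℝ (⊤ : ℕ∞) F Ω)
    (hU : ∀ x ∈ Ω, Uval F x ≠ 0) :
    List.TFAE [
      (∀ x ∈ Ω, ∀ i j : Fin (n+1),
        gradv (Uval F) x i * gradv F x j = gradv (Uval F) x j * gradv F x i),
      (∀ x ∈ Ω, ∀ i j : Fin (n+1),
        pd1 (fun y => -(|Uval F y| ^ (-(1 : ℝ)/((n : ℝ)+2)) * gradv F y j)) i x
          = pd1 (fun y => -(|Uval F y| ^ (-(1 : ℝ)/((n : ℝ)+2)) * gradv F y i)) j x),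
      (∀ x ∈ Ω, ∀ i j : Fin (n+1),
        muF n F x i * gradv F x j = muF n F x j * gradv F x i),
      (∀ x ∈ Ω, ∃ a b : ℝ, ¬(a = 0 ∧ b = 0) ∧
        a • EANormal n F x + b • Nvec F x = 0),
      (∀ x ∈ Ω, EANormal n F x
        = (-(Real.sign (Uval F x) * |Uval F x| ^ (-((n : ℝ)+1)/((n : ℝ)+2)))) • Nvec F x)
    ] :=
  stmt10_general n Ω hΩ F hF hU
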